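/- Among the n^{n−2} labelled trees on n vertices, the proportion whose maximum degree exceeds k is at most 2n/k!, for any integer k ≥ 0. Equivalently, the number of labelled trees on n vertices having some vertex of degree greater than k is at most (2n/k!) · n^{n−2}. -/

import Mathlib

/-!
A tree on `n ≥ 2` vertices is determined by its Prüfer code, a word of length `n - 2` in which
every vertex `v` occurs `deg v - 1` times. Hence the trees in which `v` has degree `> k` inject
into the words with at least `k` letters `v`, of which there are at most
`C(n-2, k) n^(n-2-k) ≤ n^(n-2) / k!`. A union bound over the `n` vertices gives
`n · n^(n-2) / k!`.
-/

open Finset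
open scoped Classical

lemma Fintype.card_compl_singleton_add_one {V : Type*} [Fintype V] [DecidableEq V] (v : V) :
    Fintype.card ({v}ᶜ : Set V) + 1 = Fintype.card V := by
  have := Fintype.card_pos_iff.2 ⟨v⟩
  rw [Fintype.card_compl_set, Set.card_singleton]
  omega

namespace SimpleGraph

variable {V : Type*} {G : SimpleGraph V}

lemma IsTree.induce_compl_singleton_of_degree_eq_one [Fintype V] [DecidableRel G.Adj]
    (hG : G.IsTree) {v : V} (hv : G.degree v = 1) : (G.induce {v}ᶜ).IsTree :=
  ⟨hG.connected.induce_compl_singleton_of_degree_eq_one hv, hG.isAcyclic.induce _⟩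

lemma degree_induce_compl_singleton [Fintype V] [DecidableEq V] [DecidableRel G.Adj] (w : V)
    (v : ({w}ᶜ : Set V)) : (G.induce {w}ᶜ).degree v = #((G.neighborFinset v).erase w) := by
  rw [← card_neighborFinset_eq_degree, ← card_map (.subtype _), map_neighborFinset_induce]
  congr 1
  ext; simp [and_comm]

lemma IsTree.eq_top_of_card_eq_two [Fintype V] (hG : G.IsTree) (h2 : Fintype.card V = 2) :
    G = ⊤ := by
  rw [← edgeFinset_inj]
  apply eq_of_subset_of_card_le (edgeFinset_mono le_top)
  have := hG.card_edgeFinset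
  rw [card_edgeFinset_top_eq_card_choose_two, h2, Nat.choose_self]
  omega

lemma IsTree.degree_eq_one_of_card_eq_two [Fintype V] [DecidableRel G.Adj] (hG : G.IsTree)
    (h2 : Fintype.card V = 2) (v : V) : G.degree v = 1 := by
  have htop := hG.eq_top_of_card_eq_two h2
  rw [← card_neighborFinset_eq_degree, neighborFinset_eq_filter]
  simp_rw [htop, top_adj]
  rw [filter_ne, card_erase_of_mem (mem_univ v), card_univ, h2]

lemma eq_of_induce_compl_singleton_eq {G₁ G₂ : SimpleGraph V} (v : V)
    (h : G₁.induce {v}ᶜ = G₂.induce {v}ᶜ) (hv : ∀ w, G₁.Adj v w ↔ G₂.Adj v w) : G₁ = G₂ := by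
  ext a b
  by_cases ha : a = v
  · subst ha; exact hv b
  by_cases hb : b = v
  · subst hb; simpa [adj_comm] using hv a
  simpa using congrArg (fun H : SimpleGraph ({v}ᶜ : Set V) ↦ H.Adj ⟨a, ha⟩ ⟨b, hb⟩) h

-- On a tree `G.neighborFinset ℓ` is a singleton, so the default `ℓ` of `unbotD` is never used.
def pruferCode {V : Type*} [Fintype V] [LinearOrder V] (G : SimpleGraph V)
    [DecidableRel G.Adj] : List V :=
  if h : 2 < Fintype.card V ∧ ({v | G.degree v = 1} : Finset V).Nonempty then
    let ℓ := Finset.min' _ h.2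
    WithBot.unbotD ℓ (G.neighborFinset ℓ).max :: (pruferCode (G.induce {ℓ}ᶜ)).map Subtype.val
  else []
termination_by Fintype.card V
decreasing_by exact Fintype.card_subtype_lt (x := Finset.min' _ h.2) (by simp)

section Prufer

variable [Fintype V] [LinearOrder V] [DecidableRel G.Adj]

lemma pruferCode_of_card_le_two (h : Fintype.card V ≤ 2) : G.pruferCode = [] := by
  rw [pruferCode, dif_neg (by omega)]

lemma pruferCode_of_isLeast (h : 2 < Fintype.card V) {ℓ u : V}
    (hℓ : IsLeast {v | G.degree v = 1} ℓ) (hu : G.neighborFinset ℓ = {u}) :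
    G.pruferCode = u :: (G.induce {ℓ}ᶜ).pruferCode.map Subtype.val := by
  have hne : ({v | G.degree v = 1} : Finset V).Nonempty := ⟨ℓ, by simpa using hℓ.1⟩
  have hmin : Finset.min' _ hne = ℓ :=
    le_antisymm (min'_le _ _ (by simpa using hℓ.1))
      (le_min' _ _ _ fun v hv => hℓ.2 (by simpa using hv))
  rw [pruferCode, dif_pos ⟨h, hne⟩, hmin]
  simp only [hu, max_singleton, WithBot.unbotD_coe]

lemma IsTree.exists_isLeast_leaf (hG : G.IsTree) (h : 1 < Fintype.card V) :
    ∃ ℓ u, IsLeast {v | G.degree v = 1} ℓ ∧ G.neighborFinset ℓ = {u} := by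
  have := Fintype.one_lt_card_iff_nontrivial.1 h
  obtain ⟨w, hw⟩ := hG.exists_vert_degree_one_of_nontrivial
  have hne : ({v | G.degree v = 1} : Finset V).Nonempty := ⟨w, by simpa using hw⟩
  have hℓ := isLeast_min' _ hne
  rw [coe_filter] at hℓ
  simp only [mem_univ, true_and] at hℓ
  obtain ⟨u, hu⟩ := card_eq_one.1 ((card_neighborFinset_eq_degree G _).trans hℓ.1)
  exact ⟨_, u, hℓ, hu⟩

lemma IsTree.length_pruferCode (hG : G.IsTree) (h2 : 2 ≤ Fintype.card V) :
    G.pruferCode.length + 2 = Fintype.card V := by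
  obtain ⟨n, hn⟩ : ∃ n, Fintype.card V = n + 2 := ⟨_, (Nat.sub_add_cancel h2).symm⟩
  induction n generalizing V with
  | zero => simp [pruferCode_of_card_le_two hn.le, hn]
  | succ n ih =>
    obtain ⟨ℓ, u, hℓ, hu⟩ := hG.exists_isLeast_leaf (by omega)
    have hcard := Fintype.card_compl_singleton_add_one ℓ
    have := ih (G := G.induce {ℓ}ᶜ) (hG.induce_compl_singleton_of_degree_eq_one hℓ.1)
      (by omega) (by omega)
    rw [pruferCode_of_isLeast (by omega) hℓ hu, List.length_cons, List.length_map]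
    omega

lemma IsTree.count_pruferCode_add_one (hG : G.IsTree) (h2 : 2 ≤ Fintype.card V) (v : V) :
    G.pruferCode.count v + 1 = G.degree v := by
  obtain ⟨n, hn⟩ : ∃ n, Fintype.card V = n + 2 := ⟨_, (Nat.sub_add_cancel h2).symm⟩
  induction n generalizing V with
  | zero => simp [pruferCode_of_card_le_two hn.le, hG.degree_eq_one_of_card_eq_two hn]
  | succ n ih =>
    obtain ⟨ℓ, u, hℓ, hu⟩ := hG.exists_isLeast_leaf (by omega)
    have hcard := Fintype.card_compl_singleton_add_one ℓ
    have hadj : ∀ w, G.Adj ℓ w ↔ w = u := fun w => by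
      rw [← mem_neighborFinset, hu, mem_singleton]
    rw [pruferCode_of_isLeast (by omega) hℓ hu, List.count_cons]
    by_cases hvℓ : v = ℓ
    · subst hvℓ
      have huv : u ≠ v := ((hadj u).2 rfl).ne'
      rw [List.count_eq_zero.2 (by simp)]
      simpa [huv] using hℓ.1.symm
    · have hT' := ih (G := G.induce {ℓ}ᶜ) (hG.induce_compl_singleton_of_degree_eq_one hℓ.1)
        (by omega) ⟨v, hvℓ⟩ (by omega)
      rw [degree_induce_compl_singleton] at hT'
      -- The induction hypothesis counts with the `BEq` derived from `DecidableEq`,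
      -- not with `Subtype.instBEq`.
      rw [← @List.count_map_of_injective _ _ instBEqOfDecidableEq _ _ _ _ Subtype.val
        Subtype.val_injective] at hT'
      dsimp only at hT'
      have hℓv : ℓ ∈ G.neighborFinset v ↔ u = v := by
        rw [mem_neighborFinset, adj_comm, hadj, eq_comm]
      by_cases huv : u = v
      · have := card_erase_add_one (hℓv.2 huv)
        rw [card_neighborFinset_eq_degree] at this
        simp only [huv, beq_self_eq_true, if_true]
        omega
      · rw [erase_eq_of_notMem (hℓv.not.2 huv), card_neighborFinset_eq_degree] at hT'
        simpa [huv] using hT'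

lemma IsTree.eq_of_pruferCode_eq {G₁ G₂ : SimpleGraph V} [DecidableRel G₁.Adj]
    [DecidableRel G₂.Adj] (h₁ : G₁.IsTree) (h₂ : G₂.IsTree)
    (h : G₁.pruferCode = G₂.pruferCode) : G₁ = G₂ := by
  obtain hV | ⟨n, hn⟩ : Fintype.card V ≤ 1 ∨ ∃ n, Fintype.card V = n + 2 :=
    (le_or_gt _ 1).imp_right fun h => ⟨_, (Nat.sub_add_cancel h).symm⟩
  · have := Fintype.card_le_one_iff_subsingleton.1 hV
    ext a b
    simp [Subsingleton.elim a b]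
  induction n generalizing V with
  | zero => rw [h₁.eq_top_of_card_eq_two hn, h₂.eq_top_of_card_eq_two hn]
  | succ n ih =>
    obtain ⟨ℓ, u, hℓ, hu⟩ := h₁.exists_isLeast_leaf (by omega)
    obtain ⟨ℓ', u', hℓ', hu'⟩ := h₂.exists_isLeast_leaf (by omega)
    have hleaves : {v | G₁.degree v = 1} = {v | G₂.degree v = 1} := by
      ext v
      simp only [Set.mem_ofPred_eq, ← h₁.count_pruferCode_add_one (by omega),
        ← h₂.count_pruferCode_add_one (by omega), h]
    obtain rfl : ℓ = ℓ' := (hleaves ▸ hℓ).unique hℓ'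
    rw [pruferCode_of_isLeast (by omega) hℓ hu, pruferCode_of_isLeast (by omega) hℓ' hu',
      List.cons.injEq] at h
    obtain ⟨rfl, htail⟩ := h
    have hcard := Fintype.card_compl_singleton_add_one ℓ
    refine eq_of_induce_compl_singleton_eq ℓ ?_ fun w => ?_
    · exact ih (h₁.induce_compl_singleton_of_degree_eq_one hℓ.1)
        (h₂.induce_compl_singleton_of_degree_eq_one hℓ'.1)
        (List.map_injective_iff.2 Subtype.val_injective htail) (by omega)
    · rw [← mem_neighborFinset, ← mem_neighborFinset, hu, hu']

end Prufer

end SimpleGraph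

section Counting

lemma List.ofFn_getD_of_length_eq {α : Type*} {l : List α} {m : ℕ} (h : l.length = m) (d : α) :
    List.ofFn (fun i : Fin m => l.getD i d) = l := by
  subst h
  apply List.ext_getElem <;> simp

variable {α : Type*} [DecidableEq α]

lemma card_filter_apply_eq_eq_count_ofFn {m : ℕ} (f : Fin m → α) (a : α) :
    #{i | f i = a} = (List.ofFn f).count a := by
  rw [← Multiset.coe_count, ← Fin.univ_val_map, Multiset.count_map, ← filter_val, card_val]
  simp only [eq_comm]

variable [Fintype α]

lemma card_filter_forall_mem_apply_eq {m : ℕ} (a : α) (P : Finset (Fin m)) :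
    #{f : Fin m → α | ∀ i ∈ P, f i = a} = Fintype.card α ^ (m - #P) := by
  have : ({f : Fin m → α | ∀ i ∈ P, f i = a} : Finset _) =
      Fintype.piFinset fun i => if i ∈ P then {a} else univ := by
    ext f
    simp only [mem_filter, mem_univ, true_and, Fintype.mem_piFinset]
    refine forall_congr' fun i => ?_
    split_ifs with hi <;> simp [hi]
  rw [this, Fintype.card_piFinset]
  simp [apply_ite, prod_ite, filter_not, card_sdiff]

lemma card_filter_le_card_fiber_le_choose_mul_pow (m k : ℕ) (a : α) :
    #{f : Fin m → α | k ≤ #{i | f i = a}} ≤ m.choose k * Fintype.card α ^ (m - k) := by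
  have hcover : ({f : Fin m → α | k ≤ #{i | f i = a}} : Finset _) ⊆
      (powersetCard k univ).biUnion fun P => {f | ∀ i ∈ P, f i = a} := by
    intro f hf
    obtain ⟨P, hPf, hP⟩ := exists_subset_card_eq (mem_filter.1 hf).2
    simp only [mem_biUnion, mem_powersetCard, mem_filter, mem_univ, true_and]
    exact ⟨P, ⟨subset_univ P, hP⟩, fun i hi => (mem_filter.1 (hPf hi)).2⟩
  calc _ ≤ _ := card_le_card hcover
    _ ≤ _ := card_biUnion_le
    _ = ∑ P ∈ powersetCard k (univ : Finset (Fin m)), Fintype.card α ^ (m - k) :=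
      sum_congr rfl fun P hP => by
        rw [card_filter_forall_mem_apply_eq, (mem_powersetCard.1 hP).2]
    _ = _ := by simp

end Counting

lemma Nat.factorial_mul_choose_mul_pow_le {m N : ℕ} (k : ℕ) (h : m ≤ N) :
    k.factorial * (m.choose k * N ^ (m - k)) ≤ N ^ m := by
  rcases le_or_gt k m with hk | hk
  · rw [← mul_assoc, ← Nat.descFactorial_eq_factorial_mul_choose, ← pow_mul_pow_sub N hk]
    gcongr
    exact (Nat.descFactorial_le_pow m k).trans (Nat.pow_le_pow_left h k)
  · simp [Nat.choose_eq_zero_of_lt hk]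

namespace SimpleGraph

theorem factorial_mul_card_isTree_lt_degree_le {V : Type*} [Fintype V] [LinearOrder V] (k : ℕ)
    (v : V) :
    k.factorial * #{T : SimpleGraph V | T.IsTree ∧ k < T.degree v} ≤
      Fintype.card V ^ (Fintype.card V - 2) := by
  set n := Fintype.card V
  by_cases hV : n ≤ 1
  · have : ({T : SimpleGraph V | T.IsTree ∧ k < T.degree v} : Finset _) = ∅ :=
      filter_eq_empty_iff.2 fun T _ hT => by have := T.degree_lt_card_verts v; omega
    simp [this]
  let code (T : SimpleGraph V) : Fin (n - 2) → V := fun i => T.pruferCode.getD i v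
  have hcode {T : SimpleGraph V} (hT : T.IsTree) : List.ofFn (code T) = T.pruferCode :=
    List.ofFn_getD_of_length_eq (by have := hT.length_pruferCode (by omega); omega) v
  have hinj : #{T : SimpleGraph V | T.IsTree ∧ k < T.degree v} ≤
      #{f : Fin (n - 2) → V | k ≤ #{i | f i = v}} := by
    refine card_le_card_of_injOn code (fun T hT => ?_) (fun T₁ hT₁ T₂ hT₂ h => ?_)
    · simp only [coe_filter, mem_univ, true_and, Set.mem_ofPred_eq] at hT ⊢
      rw [card_filter_apply_eq_eq_count_ofFn, hcode hT.1]
      have := hT.1.count_pruferCode_add_one (by omega) v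
      omega
    · simp only [coe_filter, mem_univ, true_and, Set.mem_ofPred_eq] at hT₁ hT₂
      exact hT₁.1.eq_of_pruferCode_eq hT₂.1 (by rw [← hcode hT₁.1, ← hcode hT₂.1, h])
  calc _ ≤ k.factorial * ((n - 2).choose k * n ^ (n - 2 - k)) := by
        gcongr
        exact hinj.trans (card_filter_le_card_fiber_le_choose_mul_pow _ _ v)
    _ ≤ n ^ (n - 2) := Nat.factorial_mul_choose_mul_pow_le k (by omega)

theorem factorial_mul_card_isTree_exists_lt_degree_le {V : Type*} [Fintype V] [LinearOrder V]
    (k : ℕ) :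
    k.factorial * #{T : SimpleGraph V | T.IsTree ∧ ∃ v, k < T.degree v} ≤
      Fintype.card V * Fintype.card V ^ (Fintype.card V - 2) := by
  have hunion : ({T : SimpleGraph V | T.IsTree ∧ ∃ v, k < T.degree v} : Finset _) ⊆
      univ.biUnion fun v => {T | T.IsTree ∧ k < T.degree v} := by
    intro T
    simp only [mem_filter, mem_univ, true_and, mem_biUnion]
    exact fun ⟨hT, v, hv⟩ => ⟨v, hT, hv⟩
  calc _ ≤ k.factorial * ∑ v : V, #{T : SimpleGraph V | T.IsTree ∧ k < T.degree v} := by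
        gcongr
        exact (card_le_card hunion).trans card_biUnion_le
    _ ≤ ∑ _v : V, Fintype.card V ^ (Fintype.card V - 2) := by
        rw [mul_sum]
        exact sum_le_sum fun v _ => factorial_mul_card_isTree_lt_degree_le k v
    _ = _ := by simp

end SimpleGraph

/-- Fact (i) in the proof of Theorem 2.8(c): among the `n^{n-2}` labelled trees
on `n` vertices, the number having some vertex of degree greater than `k` is at
most `(2n/k!)·n^{n-2}`. -/
theorem stmt15 (n k : ℕ) :
    (Nat.card {T : SimpleGraph (Fin n) //
        T.IsTree ∧ ∃ v, k < Nat.card (T.neighborSet v)} : ℝ)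
      ≤ 2 * (n : ℝ) / (k.factorial : ℝ) * (n : ℝ) ^ (n - 2) := by
  have hdeg (T : SimpleGraph (Fin n)) (v : Fin n) : Nat.card (T.neighborSet v) = T.degree v := by
    rw [Nat.card_eq_fintype_card, SimpleGraph.card_neighborSet_eq_degree]
  have hcount := SimpleGraph.factorial_mul_card_isTree_exists_lt_degree_le (V := Fin n) k
  rw [Fintype.card_fin] at hcount
  simp only [hdeg, Nat.card_eq_fintype_card, Fintype.card_subtype]
  rw [div_mul_eq_mul_div, le_div_iff₀ (by positivity), mul_comm, mul_assoc]
  -- `convert` absorbs the differing decidability instances of the two filters.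
  calc _ ≤ ((n * n ^ (n - 2) : ℕ) : ℝ) := by exact_mod_cast (by convert hcount using 4)
    _ ≤ 2 * (n * n ^ (n - 2)) := by
      push_cast
      exact le_mul_of_one_le_left (by positivity) one_le_two
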